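/- The map S₁₂ is an involution on the irrationals of (0,1): for every irrational x ∈ (0,1), S₁₂(S₁₂(x)) = x. In particular, S₁₂ maps the irrationals of the unit interval bijectively onto themselves. -/

import Mathlib

/-!
Write `x = 1/(a₁ + 1/(a₂ + r))` with digits `a₁, a₂` and tail `r = G(G(x))`. On `[0, 1)`
the map `y ↦ 1/(a + y)` is a right inverse of the Gauss map that produces the digit `a`, so
applying `S₁₂` to `S₁₂(x) = 1/(a₂ + 1/(a₁ + r))` reads off the digits `a₂, a₁` and the tail
`r` again and reassembles them into `1/(a₁ + 1/(a₂ + r)) = x`.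
-/

noncomputable def gaussMap (x : ℝ) : ℝ := 1 / x - ⌊1 / x⌋

/-- The first-two-digit swap map of continued fractions:
`S₁₂(x) = 1/(a₂ + 1/(a₁ + G(G(x))))` with `a₁ = ⌊1/x⌋`, `a₂ = ⌊1/G(x)⌋`. -/
noncomputable def S12 (x : ℝ) : ℝ :=
  1 / ((⌊1 / gaussMap x⌋ : ℝ) + 1 / ((⌊1 / x⌋ : ℝ) + gaussMap (gaussMap x)))

open Set

lemma gaussMap_eq_fract (x : ℝ) : gaussMap x = Int.fract (1 / x) := rfl

lemma Irrational.gaussMap {x : ℝ} (hx : Irrational x) : Irrational (_root_.gaussMap x) := by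
  rw [_root_.gaussMap, one_div]
  exact hx.inv.sub_intCast _

lemma Irrational.gaussMap_mem_Ioo {x : ℝ} (hx : Irrational x) : _root_.gaussMap x ∈ Ioo 0 1 :=
  ⟨lt_of_le_of_ne (Int.fract_nonneg _) hx.gaussMap.ne_zero.symm, Int.fract_lt_one _⟩

lemma one_le_floor_one_div {x : ℝ} (hx : x ∈ Ioc 0 1) : 1 ≤ ⌊1 / x⌋ :=
  Int.le_floor.mpr (by simpa using one_le_one_div hx.1 hx.2)

/-- The inverse branch of the Gauss map onto the points with first digit `a`. -/
noncomputable def prependDigit (a : ℤ) (r : ℝ) : ℝ := 1 / (a + r)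

section prependDigit

variable {a : ℤ} {r : ℝ}

lemma floor_one_div_prependDigit (hr : r ∈ Ico 0 1) : ⌊1 / prependDigit a r⌋ = a := by
  rw [prependDigit, one_div_one_div, Int.floor_intCast_add, Int.floor_eq_zero_iff.mpr hr,
    add_zero]

lemma gaussMap_prependDigit (hr : r ∈ Ico 0 1) : gaussMap (prependDigit a r) = r := by
  rw [gaussMap_eq_fract, prependDigit, one_div_one_div, Int.fract_intCast_add,
    Int.fract_eq_self.mpr hr]

lemma prependDigit_floor_gaussMap (x : ℝ) : prependDigit ⌊1 / x⌋ (gaussMap x) = x := by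
  rw [prependDigit, gaussMap, add_sub_cancel, one_div_one_div]

lemma Irrational.prependDigit (hr : Irrational r) : Irrational (_root_.prependDigit a r) := by
  rw [_root_.prependDigit, one_div]
  exact (hr.intCast_add a).inv

lemma prependDigit_mem_Ioo (ha : 1 ≤ a) (hr : r ∈ Ioo 0 1) : prependDigit a r ∈ Ioo 0 1 := by
  have hsum : 1 < (a : ℝ) + r := by
    have : (1 : ℝ) ≤ a := mod_cast ha
    linarith [hr.1]
  exact ⟨one_div_pos.mpr (by linarith), (div_lt_one (by linarith)).mpr hsum⟩

end prependDigit

lemma S12_eq_prependDigit (x : ℝ) :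
    S12 x = prependDigit ⌊1 / gaussMap x⌋ (prependDigit ⌊1 / x⌋ (gaussMap (gaussMap x))) :=
  rfl

lemma eq_prependDigit_prependDigit (x : ℝ) :
    x = prependDigit ⌊1 / x⌋ (prependDigit ⌊1 / gaussMap x⌋ (gaussMap (gaussMap x))) := by
  rw [prependDigit_floor_gaussMap, prependDigit_floor_gaussMap]

lemma S12_prependDigit_prependDigit {a b : ℤ} {r : ℝ} (ha : 1 ≤ a) (hr : r ∈ Ioo 0 1) :
    S12 (prependDigit b (prependDigit a r)) = prependDigit a (prependDigit b r) := by
  have hinner : prependDigit a r ∈ Ico 0 1 := Ioo_subset_Ico_self (prependDigit_mem_Ioo ha hr)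
  have htail : r ∈ Ico 0 1 := Ioo_subset_Ico_self hr
  rw [S12_eq_prependDigit, floor_one_div_prependDigit hinner, gaussMap_prependDigit hinner,
    floor_one_div_prependDigit htail, gaussMap_prependDigit htail]

lemma S12_S12 {x : ℝ} (hx : Irrational x) (hx01 : x ∈ Ioo 0 1) : S12 (S12 x) = x := by
  rw [S12_eq_prependDigit x,
    S12_prependDigit_prependDigit (one_le_floor_one_div (Ioo_subset_Ioc_self hx01))
      hx.gaussMap.gaussMap_mem_Ioo, ← eq_prependDigit_prependDigit]

lemma S12_mapsTo :
    MapsTo S12 ({x : ℝ | Irrational x} ∩ Ioo 0 1) ({x : ℝ | Irrational x} ∩ Ioo 0 1) := by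
  rintro x ⟨hx : Irrational x, hx01⟩
  rw [S12_eq_prependDigit]
  exact ⟨hx.gaussMap.gaussMap.prependDigit.prependDigit,
    prependDigit_mem_Ioo (one_le_floor_one_div (Ioo_subset_Ioc_self hx.gaussMap_mem_Ioo))
      (prependDigit_mem_Ioo (one_le_floor_one_div (Ioo_subset_Ioc_self hx01))
        hx.gaussMap.gaussMap_mem_Ioo)⟩

/-- `S₁₂` is an involution on the irrationals of `(0,1)`; in particular it maps this
set bijectively onto itself. -/
theorem S12_involutive :
    (∀ x : ℝ, Irrational x → x ∈ Set.Ioo (0 : ℝ) 1 → S12 (S12 x) = x) ∧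
      Set.BijOn S12 ({x : ℝ | Irrational x} ∩ Set.Ioo (0 : ℝ) 1)
        ({x : ℝ | Irrational x} ∩ Set.Ioo (0 : ℝ) 1) := by
  have hinv : InvOn S12 S12 ({x : ℝ | Irrational x} ∩ Ioo 0 1)
      ({x : ℝ | Irrational x} ∩ Ioo 0 1) :=
    ⟨fun x hx => S12_S12 hx.1 hx.2, fun x hx => S12_S12 hx.1 hx.2⟩
  exact ⟨fun x hx hx01 => S12_S12 hx hx01, hinv.bijOn S12_mapsTo S12_mapsTo⟩
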